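/- Let N ≥ 1 and ζ_1,…,ζ_N, r_1,…,r_N ∈ ℂ with Re ζ_1 < Re ζ_2 < … < Re ζ_N and r_j ≠ 0 for all j. Fix k with 1 ≤ k ≤ N and write k̄ = N+1−k. Let B⁺ = lim_{t→+∞} exp(2ζ_k t)·A_k(t)/A_{k−1}(t) and B⁻ = lim_{t→−∞} exp(2ζ_k t)·A_{k̄}(t)/A_{k̄−1}(t), where A_0(t) = 1 and A_k(t) = Σ_{1≤l_1<…<l_k≤N} (r_{l_1}⋯r_{l_k})² W(l_1,…,l_k)² exp(−2(ζ_{l_1}+…+ζ_{l_k})t) with W(l_1,…,l_k) = Π_{p<s, p,s∈{l_1,…,l_k}}(2ζ_s − 2ζ_p). Then both limits exist, are nonzero, and B⁻/B⁺ = Π_{j=k+1}^{N}(2ζ_j − 2ζ_k)² / Π_{j=1}^{k−1}(2ζ_j − 2ζ_k)². (This is the exponentiated form of the interaction shift formula β_{k̄}^− − β_k^+ = Σ_{j≠k} ε_{jk} ln(2ζ_j − 2ζ_k)², with ε_{jk} = 1 for j > k and ε_{jk} = −1 for j < k.) -/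

import Mathlib

/-!
`A_m(t)` is a finite sum of exponentials `c(s) exp(-2 (∑_{l ∈ s} ζ_l) t)` over the `m`-subsets `s`,
with all coefficients `c(s)` nonzero. Since `Re ζ` is strictly increasing, the sum of `Re ζ_l`
over an `m`-subset is strictly smallest on the `m` lowest indices and strictly largest on the `m`
highest ones, so these subsets give the single leading term as `t → +∞`, resp. `t → -∞`. Hence
`B⁺ = c({j ≤ k}) / c({j < k})` and `B⁻ = c({j ≥ k}) / c({j > k})`, and adjoining `k` to a set `s`
not containing it multiplies `c(s)` by `r_k² ∏_{q ∈ s} (2ζ_q - 2ζ_k)²`.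
-/

/-- The tau-functions of the complex Toda chain: `tauA N ζ r k t` is the sum over
all `k`-element subsets `{l_1 < … < l_k}` of `{1,…,N}` of
`(r_{l_1}⋯r_{l_k})² W(l_1,…,l_k)² exp(-2(ζ_{l_1}+…+ζ_{l_k}) t)`, where
`W(l_1,…,l_k) = ∏_{p<s} (2ζ_s - 2ζ_p)` is the Vandermonde determinant.
In particular `tauA N ζ r 0 t = 1`. -/
noncomputable def tauA (N : ℕ) (ζ r : Fin N → ℂ) (k : ℕ) (t : ℝ) : ℂ :=
  ∑ s ∈ Finset.powersetCard k (Finset.univ : Finset (Fin N)),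
    (∏ j ∈ s, r j) ^ 2 *
    (∏ p ∈ s, ∏ q ∈ s, if p < q then 2 * ζ q - 2 * ζ p else 1) ^ 2 *
    Complex.exp (-2 * (∑ j ∈ s, ζ j) * t)

open Filter Finset Function Complex Topology

theorem tendsto_exp_mul_sum_exp_atTop {ι : Type*} (S : Finset ι) (c lam : ι → ℂ) {i₀ : ι}
    (hi₀ : i₀ ∈ S) (hdom : ∀ i ∈ S, i ≠ i₀ → (lam i).re < (lam i₀).re) :
    Tendsto (fun t : ℝ => exp (-lam i₀ * t) * ∑ i ∈ S, c i * exp (lam i * t)) atTop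
      (𝓝 (c i₀)) := by
  classical
  have hterm : ∀ i ∈ S, Tendsto (fun t : ℝ => c i * exp ((lam i - lam i₀) * t)) atTop
      (𝓝 (if i = i₀ then c i₀ else 0)) := by
    intro i hi
    split_ifs with h
    · subst h
      simp
    · have hdecay : Tendsto (fun t : ℝ => exp ((lam i - lam i₀) * t)) atTop (𝓝 0) := by
        rw [Complex.tendsto_exp_nhds_zero_iff]
        simpa using tendsto_id.const_mul_atTop_of_neg (sub_neg.2 (hdom i hi h))
      simpa using hdecay.const_mul (c i)
  have hsum := tendsto_finsetSum S hterm
  rw [sum_ite_eq' S i₀, if_pos hi₀] at hsum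
  refine hsum.congr fun t => ?_
  rw [mul_sum]
  refine sum_congr rfl fun i _ => ?_
  rw [sub_mul, sub_eq_neg_add, ← neg_mul, exp_add]
  ring

theorem Finset.sum_lt_sum_of_card_eq_of_forall_lt {ι M : Type*} [AddCommMonoid M] [LinearOrder M]
    [IsOrderedCancelAddMonoid M] {f : ι → M} {u v : Finset ι} (hcard : #u = #v)
    (hv : v.Nonempty) (hlt : ∀ x ∈ u, ∀ y ∈ v, f x < f y) :
    ∑ x ∈ u, f x < ∑ y ∈ v, f y := by
  obtain ⟨x₀, hx₀, hmax⟩ := u.exists_max_image f (card_pos.1 (hcard ▸ hv.card_pos))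
  calc ∑ x ∈ u, f x ≤ #u • f x₀ := sum_le_card_nsmul u f _ hmax
    _ = ∑ _y ∈ v, f x₀ := by rw [sum_const, hcard]
    _ < ∑ y ∈ v, f y := sum_lt_sum_of_nonempty hv fun y hy => hlt x₀ hx₀ y hy

theorem Finset.sum_lt_sum_of_card_eq_of_forall_mem_notMem {ι M : Type*} [AddCommMonoid M]
    [LinearOrder M] [IsOrderedCancelAddMonoid M] {f : ι → M} {b s : Finset ι} (hcard : #s = #b)
    (hne : s ≠ b) (hb : ∀ x ∈ b, ∀ y ∉ b, f x < f y) :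
    ∑ x ∈ b, f x < ∑ x ∈ s, f x := by
  classical
  rw [← sum_sdiff_lt_sum_sdiff]
  refine sum_lt_sum_of_card_eq_of_forall_lt (card_sdiff_comm hcard.symm) ?_
    fun x hx y hy => hb x (mem_sdiff.1 hx).1 y (mem_sdiff.1 hy).2
  exact sdiff_nonempty.2 fun hsub => hne (eq_of_subset_of_card_le hsub hcard.ge)

theorem StrictMono.forall_mem_notMem_lt {α M : Type*} [LinearOrder α] [Preorder M] {f : α → M}
    (hf : StrictMono f) {b : Finset α} (hb : IsLowerSet (b : Set α)) :
    ∀ x ∈ b, ∀ y ∉ b, f x < f y := by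
  intro x hx y hy
  exact hf (lt_of_not_ge fun hyx => hy (hb hyx hx))

theorem StrictMono.forall_mem_notMem_gt {α M : Type*} [LinearOrder α] [Preorder M] {f : α → M}
    (hf : StrictMono f) {b : Finset α} (hb : IsUpperSet (b : Set α)) :
    ∀ x ∈ b, ∀ y ∉ b, f y < f x := by
  intro x hx y hy
  exact hf (lt_of_not_ge fun hxy => hy (hb hxy hx))

section TodaChain

variable {N : ℕ} (ζ r : Fin N → ℂ)

noncomputable def tauCoeff (s : Finset (Fin N)) : ℂ :=
  (∏ j ∈ s, r j) ^ 2 * (∏ p ∈ s, ∏ q ∈ s, if p < q then 2 * ζ q - 2 * ζ p else 1) ^ 2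

theorem tauA_eq_sum (m : ℕ) (t : ℝ) :
    tauA N ζ r m t =
      ∑ s ∈ powersetCard m univ, tauCoeff ζ r s * exp (-2 * (∑ j ∈ s, ζ j) * t) :=
  rfl

theorem tauCoeff_insert {a : Fin N} {s : Finset (Fin N)} (ha : a ∉ s) :
    tauCoeff ζ r (insert a s) = tauCoeff ζ r s * (r a ^ 2 * ∏ q ∈ s, (2 * ζ q - 2 * ζ a) ^ 2) := by
  -- the pair `{a, q}` contributes one of the two factors below, and both square to the same value
  have hpair : ∀ q ∈ s, ((if a < q then 2 * ζ q - 2 * ζ a else 1) *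
      (if q < a then 2 * ζ a - 2 * ζ q else 1)) ^ 2 = (2 * ζ q - 2 * ζ a) ^ 2 := by
    intro q hq
    rcases lt_or_gt_of_ne (ne_of_mem_of_not_mem hq ha) with h | h
    · simp only [h.not_gt, ↓reduceIte, h, one_mul]
      ring
    · simp [h, h.not_gt]
  simp only [tauCoeff, prod_insert ha, lt_irrefl, if_false, one_mul, prod_mul_distrib]
  rw [← prod_congr rfl hpair, prod_pow, prod_mul_distrib]
  ring

theorem tauCoeff_ne_zero (hζ : Injective ζ) (hr : ∀ j, r j ≠ 0) (s : Finset (Fin N)) :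
    tauCoeff ζ r s ≠ 0 := by
  refine mul_ne_zero (pow_ne_zero _ (prod_ne_zero_iff.2 fun j _ => hr j))
    (pow_ne_zero _ (prod_ne_zero_iff.2 fun p _ => prod_ne_zero_iff.2 fun q _ => ?_))
  split_ifs with hpq
  · exact sub_ne_zero.2 fun h => hpq.ne' (hζ (mul_left_cancel₀ two_ne_zero h))
  · exact one_ne_zero

theorem tauCoeff_neg (s : Finset (Fin N)) : tauCoeff (-ζ) r s = tauCoeff ζ r s := by
  simp only [tauCoeff, ← prod_pow, Pi.neg_apply]
  congr 1
  refine prod_congr rfl fun p _ => prod_congr rfl fun q _ => ?_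
  split_ifs <;> ring

theorem tauA_neg (m : ℕ) (t : ℝ) : tauA N (-ζ) r m t = tauA N ζ r m (-t) := by
  simp only [tauA_eq_sum, tauCoeff_neg, Pi.neg_apply, sum_neg_distrib, ofReal_neg]
  congr! 3
  ring

variable {ζ}

theorem tendsto_exp_mul_tauA_atTop {b : Finset (Fin N)}
    (hb : ∀ x ∈ b, ∀ y ∉ b, (ζ x).re < (ζ y).re) :
    Tendsto (fun t : ℝ => exp (2 * (∑ j ∈ b, ζ j) * t) * tauA N ζ r #b t) atTop
      (𝓝 (tauCoeff ζ r b)) := by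
  have hdom : ∀ s ∈ powersetCard #b univ, s ≠ b →
      (-2 * ∑ j ∈ s, ζ j).re < (-2 * ∑ j ∈ b, ζ j).re := by
    intro s hs hne
    simpa [re_sum] using
      sum_lt_sum_of_card_eq_of_forall_mem_notMem (mem_powersetCard.1 hs).2 hne hb
  refine (tendsto_exp_mul_sum_exp_atTop _ (tauCoeff ζ r) (fun s => -2 * ∑ j ∈ s, ζ j)
    (mem_powersetCard.2 ⟨subset_univ b, rfl⟩) hdom).congr fun t => ?_
  rw [tauA_eq_sum]
  ring_nf

variable {r}

theorem tendsto_exp_mul_tauA_card_succ_div_atTop (hζ : Injective ζ) (hr : ∀ j, r j ≠ 0)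
    {k : Fin N} {b : Finset (Fin N)} (hk : k ∉ b) (hb : ∀ x ∈ b, ∀ y ∉ b, (ζ x).re < (ζ y).re)
    (hkb : ∀ x ∈ insert k b, ∀ y ∉ insert k b, (ζ x).re < (ζ y).re) :
    Tendsto (fun t : ℝ => exp (2 * ζ k * t) * (tauA N ζ r (#b + 1) t / tauA N ζ r #b t)) atTop
      (𝓝 (r k ^ 2 * ∏ j ∈ b, (2 * ζ j - 2 * ζ k) ^ 2)) := by
  have hlim := (tendsto_exp_mul_tauA_atTop r hkb).div (tendsto_exp_mul_tauA_atTop r hb)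
    (tauCoeff_ne_zero ζ r hζ hr b)
  rw [tauCoeff_insert ζ r hk, mul_div_cancel_left₀ _ (tauCoeff_ne_zero ζ r hζ hr b),
    card_insert_of_notMem hk] at hlim
  refine hlim.congr fun t => ?_
  rw [Pi.div_apply, sum_insert hk, mul_add, add_mul, exp_add, mul_assoc,
    mul_left_comm (exp _), mul_div_mul_left _ _ (exp_ne_zero _), mul_div_assoc]

/-- Time reversal `t ↦ -t, ζ ↦ -ζ` turns the leading terms at `+∞` into those at `-∞`. -/
theorem tendsto_exp_mul_tauA_card_succ_div_atBot (hζ : Injective ζ) (hr : ∀ j, r j ≠ 0)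
    {k : Fin N} {b : Finset (Fin N)} (hk : k ∉ b) (hb : ∀ x ∈ b, ∀ y ∉ b, (ζ y).re < (ζ x).re)
    (hkb : ∀ x ∈ insert k b, ∀ y ∉ insert k b, (ζ y).re < (ζ x).re) :
    Tendsto (fun t : ℝ => exp (2 * ζ k * t) * (tauA N ζ r (#b + 1) t / tauA N ζ r #b t)) atBot
      (𝓝 (r k ^ 2 * ∏ j ∈ b, (2 * ζ j - 2 * ζ k) ^ 2)) := by
  have hlim := (tendsto_exp_mul_tauA_card_succ_div_atTop (ζ := -ζ) (neg_injective.comp hζ) hr hk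
    (by simpa using hb) (by simpa using hkb)).comp tendsto_neg_atBot_atTop
  have hprod : ∏ j ∈ b, (2 * (-ζ) j - 2 * (-ζ) k) ^ 2 = ∏ j ∈ b, (2 * ζ j - 2 * ζ k) ^ 2 :=
    prod_congr rfl fun j _ => by simp only [Pi.neg_apply]; ring
  rw [hprod] at hlim
  refine hlim.congr fun t => ?_
  simp only [comp_apply, tauA_neg, neg_neg, Pi.neg_apply, ofReal_neg, mul_neg, neg_mul]

end TodaChain

/-- the exponentiated interaction-shift formula.  Under the
sorting condition and with all `r_j ≠ 0`, the limits
`B⁺ = lim_{t→+∞} exp(2ζ_k t) A_k/A_{k-1}` and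
`B⁻ = lim_{t→-∞} exp(2ζ_k t) A_{k̄}/A_{k̄-1}` (with `k̄ = N+1-k`) exist, are
nonzero, and satisfy
`B⁻/B⁺ = ∏_{j>k}(2ζ_j-2ζ_k)² / ∏_{j<k}(2ζ_j-2ζ_k)²`.
Here `k : Fin N` is 0-based (the paper's `k - 1`), so the paper's `k̄` is the
0-based index `N-1-k`. -/
theorem stmt_10 (N : ℕ) (ζ r : Fin N → ℂ)
    (hsort : ∀ i j : Fin N, (i : ℕ) < (j : ℕ) → (ζ i).re < (ζ j).re)
    (hr : ∀ j : Fin N, r j ≠ 0) (k : Fin N) :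
    letI kbar : Fin N := ⟨N - 1 - (k : ℕ), by have := k.isLt; omega⟩
    ∃ Bp Bm : ℂ,
      Filter.Tendsto
        (fun t : ℝ =>
          Complex.exp (2 * ζ k * t) * (tauA N ζ r ((k : ℕ) + 1) t / tauA N ζ r (k : ℕ) t))
        Filter.atTop (nhds Bp) ∧
      Filter.Tendsto
        (fun t : ℝ =>
          Complex.exp (2 * ζ k * t) *
            (tauA N ζ r ((kbar : ℕ) + 1) t / tauA N ζ r (kbar : ℕ) t))
        Filter.atBot (nhds Bm) ∧
      Bp ≠ 0 ∧ Bm ≠ 0 ∧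
      Bm / Bp =
        (∏ j ∈ Finset.univ.filter (fun j : Fin N => (k : ℕ) < (j : ℕ)),
          (2 * ζ j - 2 * ζ k) ^ 2) /
        (∏ j ∈ Finset.univ.filter (fun j : Fin N => (j : ℕ) < (k : ℕ)),
          (2 * ζ j - 2 * ζ k) ^ 2) := by
  have hmono : StrictMono fun j => (ζ j).re := fun i j hij => hsort i j hij
  have hζ : Injective ζ := hmono.injective.of_comp
  have hp := tendsto_exp_mul_tauA_card_succ_div_atTop hζ hr notMem_Iio_self
    (hmono.forall_mem_notMem_lt (by simpa using isLowerSet_Iio k))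
    (by rw [Iio_insert]; exact hmono.forall_mem_notMem_lt (by simpa using isLowerSet_Iic k))
  have hm := tendsto_exp_mul_tauA_card_succ_div_atBot hζ hr notMem_Ioi_self
    (hmono.forall_mem_notMem_gt (by simpa using isUpperSet_Ioi k))
    (by rw [Ioi_insert]; exact hmono.forall_mem_notMem_gt (by simpa using isUpperSet_Ici k))
  rw [Fin.card_Iio] at hp
  rw [Fin.card_Ioi] at hm
  have hB : ∀ b, k ∉ b → r k ^ 2 * ∏ j ∈ b, (2 * ζ j - 2 * ζ k) ^ 2 ≠ 0 := fun b hk =>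
    mul_ne_zero (pow_ne_zero _ (hr k)) (prod_ne_zero_iff.2 fun j hj => pow_ne_zero _
      (sub_ne_zero.2 fun h => ne_of_mem_of_not_mem hj hk (hζ (mul_left_cancel₀ two_ne_zero h))))
  refine ⟨_, _, hp, hm, hB _ notMem_Iio_self, hB _ notMem_Ioi_self, ?_⟩
  simp only [Fin.val_fin_lt, filter_lt_eq_Ioi, filter_gt_eq_Iio]
  exact mul_div_mul_left _ _ (pow_ne_zero 2 (hr k))
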